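/- Let F be an algebraically closed field of characteristic ≠ 2. Every simple unital commutative 3-dimensional algebra over F of nil-rank 2 is isotopic to the Jordan algebra J₂ of a nondegenerate symmetric bilinear form on a 2-dimensional vector space. -/

import Mathlib

open Module

section Defs

variable (F : Type*) [Field F]

/-- `I` is a (two-sided) ideal of the algebra `(A, mul)`. -/
def IsIdeal {A : Type*} [AddCommGroup A] [Module F A]
    (mul : A → A → A) (I : Submodule F A) : Prop :=
  ∀ a : A, ∀ u ∈ I, mul a u ∈ I ∧ mul u a ∈ I

/-- The (not necessarily associative or unital) algebra `(A, mul)` is simple: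
its multiplication is nonzero and its only ideals are `⊥` and `⊤`. -/
def IsSimpleAlg {A : Type*} [AddCommGroup A] [Module F A]
    (mul : A → A → A) : Prop :=
  (∃ u v : A, mul u v ≠ 0) ∧
  ∀ I : Submodule F A, IsIdeal F mul I → I = ⊥ ∨ I = ⊤

/-- The algebra `(A, mul)` has nil-rank `k`: there are `k` linearly independent
nil-elements of index 2, but no `k + 1` such elements. -/
def HasNilRank {A : Type*} [AddCommGroup A] [Module F A]
    (mul : A → A → A) (k : ℕ) : Prop :=
  (∃ v : Fin k → A, LinearIndependent F v ∧ ∀ i, mul (v i) (v i) = 0) ∧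
  ∀ v : Fin (k + 1) → A, LinearIndependent F v → ∃ i, mul (v i) (v i) ≠ 0

/-- The algebras `(A, mulA)` and `(B, mulB)` are isomorphic. -/
def AlgIso {A B : Type*} [AddCommGroup A] [Module F A] [AddCommGroup B] [Module F B]
    (mulA : A → A → A) (mulB : B → B → B) : Prop :=
  ∃ φ : A ≃ₗ[F] B, ∀ u v : A, φ (mulA u v) = mulB (φ u) (φ v)

/-- The algebras `(A, mulA)` and `(B, mulB)` are isotopic. -/
def Isotopic {A B : Type*} [AddCommGroup A] [Module F A] [AddCommGroup B] [Module F B]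
    (mulA : A → A → A) (mulB : B → B → B) : Prop :=
  ∃ φ ψ ξ : A ≃ₗ[F] B, ∀ u v : A, mulB (φ u) (ψ v) = ξ (mulA u v)

/-- `(e, x, y)` is a canonical basis of `A` realizing the unital commutative algebra
`C(α, β, γ)`: `e` is a multiplicative identity, `x² = y² = 0`,
and `xy = yx = α·1 + β·x + γ·y`. (`C(1,0,0)` is the Jordan algebra `J₂`.) -/
def IsCAlg {A : Type*} [AddCommGroup A] [Module F A]
    (m : A →ₗ[F] A →ₗ[F] A) (α β γ : F) (e x y : A) : Prop :=
  LinearIndependent F ![e, x, y] ∧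
  Submodule.span F {e, x, y} = ⊤ ∧
  (∀ u, m e u = u) ∧ (∀ u, m u e = u) ∧
  m x x = 0 ∧ m y y = 0 ∧
  m x y = α • e + β • x + γ • y ∧ m y x = α • e + β • x + γ • y

end Defs

/-! Pick independent `x, y` with `x² = y² = 0`. Then `(e, x, y)` is a basis (if `e = ax + cy`,
then `x = c·xy` and `y = a·xy`, which forces `e = 0`) in which `xy = αe + βx + γy`, so `A` is
`C(α, β, γ)`. Simplicity gives `α ≠ 0`, since otherwise `span {x, y}` is an ideal, and nil-rank 2
gives `2α + βγ ≠ 0`, since otherwise `e - γ⁻¹x - β⁻¹y` is a third nil-element.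

If multiplication `L_p` by `p` is bijective on `J₂`, the isotope `u ⋆ v = L_p⁻¹(uv)` of `J₂` has
unit `p`. For `p = l·1 + s·x' + t·y'` it is `C(α, β, γ)` in the basis `(p, x', y')` as soon as
`s = -β/2α`, `t = -γ/2α` and `l² = (2α + βγ)/2α²`, and this `l` exists because `F` is
algebraically closed. -/

open Submodule

lemma range_vecCons_three {X : Type*} (a b c : X) : Set.range ![a, b, c] = {a, b, c} := by
  rw [Matrix.range_cons, Matrix.range_cons_cons_empty, Set.singleton_union]

section Triples

variable {F V : Type*} [Field F] [AddCommGroup V] [Module F V]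

lemma span_smul_add_smul_add_smul_insert {l : F} (hl : l ≠ 0) (s t : F) (a b c : V) :
    span F {l • a + s • b + t • c, b, c} = span F {a, b, c} := by
  apply le_antisymm <;> rw [span_le, Set.insert_subset_iff, Set.insert_subset_iff,
    Set.singleton_subset_iff]
  · exact ⟨mem_span_triple.mpr ⟨l, s, t, rfl⟩, subset_span (by simp), subset_span (by simp)⟩
  · refine ⟨?_, subset_span (by simp), subset_span (by simp)⟩
    exact mem_span_triple.mpr ⟨l⁻¹, -(l⁻¹ * s), -(l⁻¹ * t), by
      match_scalars <;> field_simp <;> ring⟩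

lemma linearIndependent_of_span_triple_eq_top (hV : finrank F V = 3) {a b c : V}
    (h : span F {a, b, c} = ⊤) : LinearIndependent F ![a, b, c] :=
  linearIndependent_of_top_le_span_of_card_eq_finrank (by rw [range_vecCons_three, h])
    (by simp [hV])

noncomputable def basisOfSpanTripleEqTop (hV : finrank F V = 3) {a b c : V}
    (h : span F {a, b, c} = ⊤) : Basis (Fin 3) F V :=
  basisOfTopLeSpanOfCardEqFinrank ![a, b, c] (by rw [range_vecCons_three, h]) (by simp [hV])

@[simp]
lemma coe_basisOfSpanTripleEqTop (hV : finrank F V = 3) {a b c : V}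
    (h : span F {a, b, c} = ⊤) : ⇑(basisOfSpanTripleEqTop hV h) = ![a, b, c] :=
  coe_basisOfTopLeSpanOfCardEqFinrank _ _ _

end Triples

section Algebras

variable {F A B : Type*} [Field F] [AddCommGroup A] [Module F A] [AddCommGroup B] [Module F B]

lemma isotopic_of_basis (m : A →ₗ[F] A →ₗ[F] A) (m' : B →ₗ[F] B →ₗ[F] B) {ι : Type*}
    (b : Basis ι F A) (bφ bψ bξ : Basis ι F B)
    (h : ∀ i j, m' (bφ i) (bψ j) = b.equiv bξ (Equiv.refl ι) (m (b i) (b j))) :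
    Isotopic F (fun u v : A => m u v) (fun u v : B => m' u v) := by
  refine ⟨b.equiv bφ (Equiv.refl ι), b.equiv bψ (Equiv.refl ι), b.equiv bξ (Equiv.refl ι),
    fun u v => ?_⟩
  have hbil : m'.compl₁₂ (b.equiv bφ (Equiv.refl ι)).toLinearMap
      (b.equiv bψ (Equiv.refl ι)).toLinearMap = m.compr₂ (b.equiv bξ (Equiv.refl ι)).toLinearMap :=
    LinearMap.ext_basis b b fun i j => by simpa using h i j
  exact LinearMap.congr_fun₂ hbil u v

lemma isIdeal_span_of_mul_mem (m : A →ₗ[F] A →ₗ[F] A) (hcomm : ∀ u v, m u v = m v u)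
    {S T : Set A} (hS : span F S = ⊤) (h : ∀ s ∈ S, ∀ t ∈ T, m s t ∈ span F T) :
    IsIdeal F (fun u v : A => m u v) (span F T) := by
  have hmul : ∀ a, ∀ u ∈ span F T, m a u ∈ span F T := by
    intro a u hu
    have hT : ∀ t ∈ T, m a t ∈ span F T := fun t ht =>
      (span_le.mpr fun s hs => h s hs t ht : span F S ≤ (span F T).comap (m.flip t))
        (hS ▸ mem_top)
    exact (span_le.mpr hT : span F T ≤ (span F T).comap (m a)) hu
  exact fun a u hu => ⟨hmul a u hu, by simpa only [hcomm u a] using hmul a u hu⟩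

lemma exists_isCAlg_of_mul_self_eq_zero (m : A →ₗ[F] A →ₗ[F] A) (hdim : finrank F A = 3)
    (hcomm : ∀ u v, m u v = m v u) {e x y : A} (hunit : ∀ u, m e u = u ∧ m u e = u)
    (hxy : LinearIndependent F ![x, y]) (hx : m x x = 0) (hy : m y y = 0) :
    ∃ α β γ : F, IsCAlg F m α β γ e x y := by
  have he : e ∉ span F {x, y} := by
    intro he
    obtain ⟨a, c, rfl⟩ := mem_span_pair.mp he
    have hcx : c • m x y = x := by simpa [hx] using (hunit x).2
    have hay : a • m x y = y := by simpa [hy, hcomm y x] using (hunit y).2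
    have hac := LinearIndependent.pair_iff.mp hxy a (-c)
      (by linear_combination (norm := module) c • hay - a • hcx)
    have hc : c = 0 := neg_eq_zero.mp hac.2
    exact hxy.ne_zero 0 (by simpa [hc] using hcx.symm)
  have hli : LinearIndependent F ![e, x, y] :=
    linearIndependent_finCons.mpr ⟨hxy, by rwa [Matrix.range_cons_cons_empty]⟩
  have hspan : span F {e, x, y} = ⊤ := by
    rw [← range_vecCons_three]
    exact hli.span_eq_top_of_card_eq_finrank (by simp [hdim])
  obtain ⟨α, β, γ, hmul⟩ := mem_span_triple.mp (hspan ▸ mem_top : m x y ∈ span F {e, x, y})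
  exact ⟨α, β, γ, hli, hspan, fun u => (hunit u).1, fun u => (hunit u).2, hx, hy, hmul.symm,
    hcomm y x ▸ hmul.symm⟩

end Algebras

namespace IsCAlg

variable {F A : Type*} [Field F] [AddCommGroup A] [Module F A] {m : A →ₗ[F] A →ₗ[F] A}
  {α β γ : F} {e x y : A}

noncomputable def basis (h : IsCAlg F m α β γ e x y) : Basis (Fin 3) F A :=
  .mk h.1 (by rw [range_vecCons_three, h.2.1])

@[simp]
lemma coe_basis (h : IsCAlg F m α β γ e x y) : ⇑h.basis = ![e, x, y] :=
  Basis.coe_mk _ _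

lemma finrank_eq (h : IsCAlg F m α β γ e x y) : finrank F A = 3 := by
  simp [finrank_eq_card_basis h.basis]

lemma comm (h : IsCAlg F m α β γ e x y) (u v : A) : m u v = m v u := by
  have ⟨_, _, hel, her, _, _, hxy, hyx⟩ := h
  have hflip : m = m.flip := LinearMap.ext_basis h.basis h.basis fun i j => by
    fin_cases i <;> fin_cases j <;> simp [hel, her, hxy, hyx]
  exact LinearMap.congr_fun₂ hflip u v

lemma notMem_span (h : IsCAlg F m α β γ e x y) : e ∉ span F {x, y} := by
  have := (linearIndependent_finCons.mp h.1).2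
  rwa [Matrix.range_cons_cons_empty] at this

lemma ne_zero_of_isSimpleAlg (h : IsCAlg F m α β γ e x y)
    (hs : IsSimpleAlg F fun u v : A => m u v) : α ≠ 0 := by
  rintro rfl
  have ⟨hli, hspan, hel, _, hxx, hyy, hxy, hyx⟩ := h
  have hx : x ∈ span F {x, y} := subset_span (by simp)
  have hy : y ∈ span F {x, y} := subset_span (by simp)
  have hxy_mem : β • x + γ • y ∈ span F {x, y} := add_mem (smul_mem _ _ hx) (smul_mem _ _ hy)
  have hI : IsIdeal F (fun u v : A => m u v) (span F {x, y}) := by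
    refine isIdeal_span_of_mul_mem m h.comm hspan ?_
    simp only [Set.mem_insert_iff, Set.mem_singleton_iff, forall_eq_or_imp, forall_eq]
    simp [hel, hxx, hyy, hxy, hyx, hx, hy, hxy_mem]
  rcases hs.2 _ hI with hbot | htop
  · exact hli.ne_zero 1 ((mem_bot F).mp (hbot ▸ hx))
  · exact h.notMem_span (htop ▸ mem_top)

lemma two_mul_add_mul_ne_zero (h : IsCAlg F m α β γ e x y) (hchar : (2 : F) ≠ 0)
    (hα : α ≠ 0) (hnil : HasNilRank F (fun u v : A => m u v) 2) : 2 * α + β * γ ≠ 0 := by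
  intro hδ
  have ⟨_, hspan, hel, her, hxx, hyy, hxy, hyx⟩ := h
  have hβ : β ≠ 0 := by rintro rfl; exact hα (by simpa [hchar] using hδ)
  have hγ : γ ≠ 0 := by rintro rfl; exact hα (by simpa [hchar] using hδ)
  set z := (1 : F) • e + (-γ⁻¹) • x + (-β⁻¹) • y
  have hzz : m z z = 0 := by
    simp only [z, map_add, map_smul, LinearMap.add_apply, LinearMap.smul_apply, hel, her, hxx,
      hyy, hxy, hyx]
    match_scalars
    · field_simp
      linear_combination hδ
    · field_simp
      ring
    · field_simp
      ring
  have hzli : LinearIndependent F ![z, x, y] := linearIndependent_of_span_triple_eq_top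
    h.finrank_eq (by rw [span_smul_add_smul_add_smul_insert one_ne_zero, hspan])
  obtain ⟨i, hi⟩ := hnil.2 _ hzli
  fin_cases i
  · exact hi hzz
  · exact hi hxx
  · exact hi hyy

lemma exists_isotope_unit [IsAlgClosed F] (hJ : IsCAlg F m 1 0 0 e x y) (hchar : (2 : F) ≠ 0)
    (hα : α ≠ 0) (hδ : 2 * α + β * γ ≠ 0) :
    ∃ p : A, span F {p, x, y} = ⊤ ∧ span F {m p p, m p x, m p y} = ⊤ ∧
      m x y = α • m p p + β • m p x + γ • m p y := by
  have ⟨_, hspan, hel, her, hxx, hyy, hxy, hyx⟩ := hJ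
  simp only [one_smul, zero_smul, add_zero] at hxy hyx
  obtain ⟨l, hl2⟩ := IsAlgClosed.exists_pow_nat_eq ((2 * α + β * γ) / (2 * α ^ 2)) two_pos
  have hl2' : 2 * α ^ 2 * l ^ 2 = 2 * α + β * γ := by
    rw [hl2]
    field_simp
  have hl0 : l ≠ 0 := by
    rintro rfl
    exact hδ (by simpa using hl2'.symm)
  set s := -(β / (2 * α))
  set t := -(γ / (2 * α))
  set p := l • e + s • x + t • y
  have hpx : m p x = t • e + l • x := by
    simp only [p, map_add, map_smul, LinearMap.add_apply, LinearMap.smul_apply, hel, hxx, hyx]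
    module
  have hpy : m p y = s • e + l • y := by
    simp only [p, map_add, map_smul, LinearMap.add_apply, LinearMap.smul_apply, hel, hyy, hxy]
    module
  have hpp : m p p = (l ^ 2 + 2 * s * t) • e + (2 * l * s) • x + (2 * l * t) • y := by
    simp only [p, map_add, map_smul, LinearMap.add_apply, LinearMap.smul_apply, hel, her, hxx,
      hyy, hxy, hyx]
    module
  have key : e = α • m p p + β • m p x + γ • m p y := by
    rw [hpp, hpx, hpy]
    simp only [s, t]
    match_scalars
    · field_simp
      linear_combination -hl2'
    · field_simp
      ring
    · field_simp
      ring
  refine ⟨p, by rw [span_smul_add_smul_add_smul_insert hl0, hspan], ?_, hxy ▸ key⟩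
  have he : e ∈ span F {m p p, m p x, m p y} := key ▸ mem_span_triple.mpr ⟨α, β, γ, rfl⟩
  have hmem : ∀ {c : F} {u : A}, m p u ∈ span F {m p p, m p x, m p y} →
      m p u = c • e + l • u → u ∈ span F {m p p, m p x, m p y} := by
    intro c u hpu hu
    rw [← smul_mem_iff _ hl0, show l • u = m p u - c • e by rw [hu]; abel]
    exact sub_mem hpu (smul_mem _ _ he)
  rw [eq_top_iff, ← hspan, span_le, Set.insert_subset_iff, Set.insert_subset_iff,
    Set.singleton_subset_iff]
  exact ⟨he, hmem (subset_span (by simp)) hpx, hmem (subset_span (by simp)) hpy⟩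

theorem isotopic {B : Type*} [AddCommGroup B] [Module F B] (hA : IsCAlg F m α β γ e x y)
    {m' : B →ₗ[F] B →ₗ[F] B} (hcomm : ∀ u v, m' u v = m' v u) (hB : finrank F B = 3)
    {p q r : B} (hspan : span F {p, q, r} = ⊤) (hspan' : span F {m' p p, m' p q, m' p r} = ⊤)
    (hq : m' q q = 0) (hr : m' r r = 0) (hqr : m' q r = α • m' p p + β • m' p q + γ • m' p r) :
    Isotopic F (fun u v : A => m u v) (fun u v : B => m' u v) := by
  have ⟨_, _, hel, her, hxx, hyy, hxy, hyx⟩ := hA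
  set bφ := basisOfSpanTripleEqTop hB hspan
  set bξ := basisOfSpanTripleEqTop hB hspan'
  have hξ : ∀ i, hA.basis.equiv bξ (Equiv.refl _) (![e, x, y] i) = ![m' p p, m' p q, m' p r] i :=
    fun i => by simpa [bξ] using hA.basis.equiv_apply i bξ (Equiv.refl _)
  have hξe : hA.basis.equiv bξ (Equiv.refl _) e = m' p p := hξ 0
  have hξx : hA.basis.equiv bξ (Equiv.refl _) x = m' p q := hξ 1
  have hξy : hA.basis.equiv bξ (Equiv.refl _) y = m' p r := hξ 2
  refine isotopic_of_basis m m' hA.basis bφ bφ bξ fun i j => ?_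
  fin_cases i <;> fin_cases j <;>
    simp [bφ, hel, her, hxx, hyy, hxy, hyx, hξe, hξx, hξy, hq, hr, hqr, hcomm q p, hcomm r p,
      hcomm r q]

end IsCAlg

/-- Over an algebraically closed field of characteristic `≠ 2`,
every simple unital commutative 3-dimensional algebra of nil-rank `2` is isotopic
to the Jordan algebra `J₂` of a nondegenerate symmetric bilinear form on a
2-dimensional space (realized as `C(1, 0, 0)`). -/
theorem stmt15 {F : Type*} [Field F] [IsAlgClosed F] (hchar : (2 : F) ≠ 0)
    {A : Type*} [AddCommGroup A] [Module F A]
    (m : A →ₗ[F] A →ₗ[F] A)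
    (hdim : Module.finrank F A = 3)
    (hcomm : ∀ u v : A, m u v = m v u)
    (e : A) (hunit : ∀ u : A, m e u = u ∧ m u e = u)
    (hsimple : IsSimpleAlg F (fun u v : A => m u v))
    (hnil : HasNilRank F (fun u v : A => m u v) 2)
    {B : Type*} [AddCommGroup B] [Module F B]
    (m' : B →ₗ[F] B →ₗ[F] B) (e' x' y' : B)
    (hJ : IsCAlg F m' 1 0 0 e' x' y') :
    Isotopic F (fun u v : A => m u v) (fun u v : B => m' u v) := by
  obtain ⟨v, hv, hvv⟩ := hnil.1
  obtain ⟨α, β, γ, hA⟩ := exists_isCAlg_of_mul_self_eq_zero m hdim hcomm hunit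
    ((FinVec.etaExpand_eq v).symm ▸ hv) (hvv 0) (hvv 1)
  have hα := hA.ne_zero_of_isSimpleAlg hsimple
  obtain ⟨p, hspan, hspan', hxy⟩ :=
    hJ.exists_isotope_unit hchar hα (hA.two_mul_add_mul_ne_zero hchar hα hnil)
  have ⟨_, _, _, _, hxx, hyy, _⟩ := hJ
  exact hA.isotopic hJ.comm hJ.finrank_eq hspan hspan' hxx hyy hxy
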